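/- Let Ω ⊆ ℂ be open and let τ, ρ : Ω → ℝ be smooth with ρ > 0, satisfying on Ω the Liouville equation τ_{z z̄} = −e^{2τ}/4 and the Ribaucour equation ρ² + 4 e^{−2τ} ρ ρ_{z z̄} = 1 + 4 e^{−2τ} ρ_z ρ_{z̄}. Then the complex-valued function μ := (2/ρ)(ρ_{zz} − 2 τ_z ρ_z) satisfies μ_{z̄} = 0 on Ω, i.e. μ is holomorphic. (This is the statement that Ribaucour surfaces are Laguerre isothermic: with ψ = ρ^{−1}, the function ψ((h₂₂ − h₁₁)/2 + i h₁₂) built from the second fundamental form coefficients is holomorphic.) -/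

import Mathlib

/-- Wirtinger derivative `u_z = (u_x - i u_y)/2` of a complex-valued function on `ℂ`. -/
noncomputable def wdz (u : ℂ → ℂ) (z : ℂ) : ℂ :=
  (fderiv ℝ u z 1 - Complex.I * fderiv ℝ u z Complex.I) / 2

/-- Wirtinger derivative `u_z̄ = (u_x + i u_y)/2` of a complex-valued function on `ℂ`. -/
noncomputable def wdzbar (u : ℂ → ℂ) (z : ℂ) : ℂ :=
  (fderiv ℝ u z 1 + Complex.I * fderiv ℝ u z Complex.I) / 2

/-- The complexification of a real-valued function on `ℂ`. -/
noncomputable def cof (u : ℂ → ℝ) : ℂ → ℂ := fun z => (u z : ℂ)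


/-! Differentiate the Ribaucour equation, written as `4ρρ_{zz̄} - 4ρ_zρ_z̄ = e^{2τ}(1 - ρ²)`,
with respect to `z`, and the identity `ρμ = 2(ρ_{zz} - 2τ_zρ_z)` with respect to `z̄`, replacing
`τ_{zz̄}` by the Liouville equation. After commuting `∂_z` and `∂_z̄` (symmetry of second
derivatives), eliminating `ρ_{zzz̄}` between the two gives
`ρ²μ_z̄ = τ_z (e^{2τ}(1 - ρ²) - 4ρρ_{zz̄} + 4ρ_zρ_z̄)`, which vanishes by the Ribaucour equation. -/

open Complex Filter Topology

noncomputable def wirtinger (a : ℂ) (u : ℂ → ℂ) (z : ℂ) : ℂ :=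
  (fderiv ℝ u z 1 + a * fderiv ℝ u z I) / 2

theorem wdz_eq_wirtinger : wdz = wirtinger (-I) := by
  ext u z; simp only [wdz, wirtinger]; ring

theorem wdzbar_eq_wirtinger : wdzbar = wirtinger I := rfl

section Wirtinger

variable (a : ℂ) {f g : ℂ → ℂ} {z : ℂ}

theorem wirtinger_congr (h : f =ᶠ[𝓝 z] g) : wirtinger a f z = wirtinger a g z := by
  rw [wirtinger, wirtinger, h.fderiv_eq]

theorem wirtinger_const (c : ℂ) : wirtinger a (fun _ => c) z = 0 := by
  simp [wirtinger]

theorem wirtinger_sub (hf : DifferentiableAt ℝ f z) (hg : DifferentiableAt ℝ g z) :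
    wirtinger a (fun w => f w - g w) z = wirtinger a f z - wirtinger a g z := by
  simp only [wirtinger, fderiv_fun_sub hf hg, sub_apply]; ring

theorem wirtinger_mul (hf : DifferentiableAt ℝ f z) (hg : DifferentiableAt ℝ g z) :
    wirtinger a (fun w => f w * g w) z = wirtinger a f z * g z + f z * wirtinger a g z := by
  simp only [wirtinger, fderiv_fun_mul hf hg, add_apply, smul_apply, smul_eq_mul]; ring

theorem wirtinger_cexp (hf : DifferentiableAt ℝ f z) :
    wirtinger a (fun w => cexp (f w)) z = cexp (f z) * wirtinger a f z := by
  simp only [wirtinger, hf.hasFDerivAt.cexp.fderiv, smul_apply, smul_eq_mul]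
  ring

theorem contDiffAt_wirtinger {m n : WithTop ℕ∞} (hf : ContDiffAt ℝ n f z) (hmn : m + 1 ≤ n) :
    ContDiffAt ℝ m (wirtinger a f) z := by
  have h := hf.fderiv_right hmn
  unfold wirtinger
  fun_prop

theorem fderiv_wirtinger_apply (hf : DifferentiableAt ℝ (fderiv ℝ f) z) (v : ℂ) :
    fderiv ℝ (wirtinger a f) z v =
      (fderiv ℝ (fderiv ℝ f) z v 1 + a * fderiv ℝ (fderiv ℝ f) z v I) / 2 := by
  have h1 := hf.hasFDerivAt.clm_apply (hasFDerivAt_const (1 : ℂ) z)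
  have hI := hf.hasFDerivAt.clm_apply (hasFDerivAt_const I z)
  have h : HasFDerivAt (wirtinger a f) _ z := (h1.add (hI.const_mul a)).mul_const (2⁻¹ : ℂ)
  simp [h.fderiv]
  ring

theorem wirtinger_comm (b : ℂ) (hf : ContDiffAt ℝ 2 f z) :
    wirtinger a (wirtinger b f) z = wirtinger b (wirtinger a f) z := by
  have hd : DifferentiableAt ℝ (fderiv ℝ f) z :=
    (hf.fderiv_right le_rfl).differentiableAt one_ne_zero
  have hsymm := hf.isSymmSndFDerivAt (by simp) 1 I
  simp only [wirtinger, fderiv_wirtinger_apply _ hd]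
  rw [hsymm]
  ring

end Wirtinger

theorem wirtinger_I_eq_zero_of_ribaucour {f t μ : ℂ → ℂ} {z : ℂ}
    (hf : ContDiffAt ℝ 3 f z) (ht : ContDiffAt ℝ 2 t z) (hf0 : f z ≠ 0)
    (hL : wirtinger I (wirtinger (-I) t) z = -cexp (2 * t z) / 4)
    (hR : ∀ᶠ w in 𝓝 z, f w ^ 2 + 4 * cexp (-(2 * t w)) * f w * wirtinger I (wirtinger (-I) f) w
      = 1 + 4 * cexp (-(2 * t w)) * wirtinger (-I) f w * wirtinger I f w)
    (hμ : ∀ᶠ w in 𝓝 z, μ w = 2 / f w *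
      (wirtinger (-I) (wirtinger (-I) f) w - 2 * wirtinger (-I) t w * wirtinger (-I) f w)) :
    wirtinger I μ z = 0 := by
  have hfz : ContDiffAt ℝ 2 (wirtinger (-I) f) z := contDiffAt_wirtinger _ hf (by norm_num)
  have hfzb : ContDiffAt ℝ 2 (wirtinger I f) z := contDiffAt_wirtinger _ hf (by norm_num)
  have hfzz : ContDiffAt ℝ 1 (wirtinger (-I) (wirtinger (-I) f)) z :=
    contDiffAt_wirtinger _ hfz (by norm_num)
  have hfzzb : ContDiffAt ℝ 1 (wirtinger I (wirtinger (-I) f)) z :=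
    contDiffAt_wirtinger _ hfz (by norm_num)
  have htz : ContDiffAt ℝ 1 (wirtinger (-I) t) z := contDiffAt_wirtinger _ ht (by norm_num)
  have df := hf.differentiableAt (by norm_num)
  have dt := ht.differentiableAt (by norm_num)
  have dfz := hfz.differentiableAt (by norm_num)
  have dfzb := hfzb.differentiableAt (by norm_num)
  have dfzz := hfzz.differentiableAt one_ne_zero
  have dfzzb := hfzzb.differentiableAt one_ne_zero
  have dtz := htz.differentiableAt one_ne_zero
  have hRib : (fun w => 4 * f w * wirtinger I (wirtinger (-I) f) w
      - 4 * wirtinger (-I) f w * wirtinger I f w) =ᶠ[𝓝 z]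
      fun w => cexp (2 * t w) * (1 - f w ^ 2) := hR.mono fun w hw => by
    rw [exp_neg] at hw
    field_simp at hw
    linear_combination hw
  have hRib_z := wirtinger_congr (-I) hRib
  simp (disch := fun_prop) only [wirtinger_sub, wirtinger_mul, wirtinger_cexp, pow_two,
    wirtinger_const] at hRib_z
  rw [wirtinger_comm (-I) I (hf.of_le (by norm_num)), wirtinger_comm (-I) I hfz] at hRib_z
  have hfμ : (fun w => f w * μ w) =ᶠ[𝓝 z] fun w =>
      2 * (wirtinger (-I) (wirtinger (-I) f) w - 2 * wirtinger (-I) t w * wirtinger (-I) f w) :=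
    (hμ.and (hf.continuousAt.eventually_ne hf0)).mono fun w ⟨hw, hw0⟩ => by
      beta_reduce; rw [hw]; field_simp
  have dμ : DifferentiableAt ℝ μ z := by
    refine DifferentiableAt.congr_of_eventuallyEq ?_ hμ
    fun_prop (disch := exact hf0)
  have hfμ_zbar := wirtinger_congr I hfμ
  simp (disch := fun_prop) only [wirtinger_sub, wirtinger_mul, wirtinger_const] at hfμ_zbar
  rw [hL] at hfμ_zbar
  have : f z ^ 2 * wirtinger I μ z = 0 := by
    linear_combination f z * hfμ_zbar - wirtinger I f z * hfμ.eq_of_nhds + (1 / 2 : ℂ) * hRib_z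
      - wirtinger (-I) t z * hRib.eq_of_nhds
  simpa [hf0] using this

theorem ribaucour_surfaces_are_laguerre_isothermic
    (Ω : Set ℂ) (hΩ : IsOpen Ω) (τ ρ : ℂ → ℝ)
    (hτ : ContDiffOn ℝ (⊤ : ℕ∞) τ Ω) (hρ : ContDiffOn ℝ (⊤ : ℕ∞) ρ Ω)
    (hρpos : ∀ z ∈ Ω, 0 < ρ z)
    (hLiouville : ∀ z ∈ Ω,
      wdzbar (wdz (cof τ)) z = -(Real.exp (2 * τ z) : ℂ) / 4)
    (hRibaucour : ∀ z ∈ Ω,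
      (ρ z : ℂ) ^ 2 + 4 * (Real.exp (-(2 * τ z)) : ℂ) * (ρ z : ℂ) * wdzbar (wdz (cof ρ)) z
        = 1 + 4 * (Real.exp (-(2 * τ z)) : ℂ) * wdz (cof ρ) z * wdzbar (cof ρ) z)
    (μ : ℂ → ℂ)
    (hμ : ∀ z ∈ Ω, μ z =
      2 / (ρ z : ℂ) * (wdz (wdz (cof ρ)) z - 2 * wdz (cof τ) z * wdz (cof ρ) z)) :
    ∀ z ∈ Ω, wdzbar μ z = 0 := by
  intro z hz
  have hΩz : Ω ∈ 𝓝 z := hΩ.mem_nhds hz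
  have hcof {u : ℂ → ℝ} (hu : ContDiffOn ℝ (⊤ : ℕ∞) u Ω) {n : ℕ} : ContDiffAt ℝ n (cof u) z :=
    (ofRealCLM.contDiff.comp_contDiffAt z (hu.contDiffAt hΩz)).of_le (by exact_mod_cast le_top)
  simp only [wdz_eq_wirtinger, wdzbar_eq_wirtinger] at hLiouville hRibaucour hμ ⊢
  refine wirtinger_I_eq_zero_of_ribaucour (hcof hρ) (hcof hτ)
    (ofReal_ne_zero.2 (hρpos z hz).ne') ?_ ?_ ?_
  · rw [hLiouville z hz]
    push_cast
    rfl
  · filter_upwards [hΩz] with w hw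
    have h := hRibaucour w hw
    push_cast at h
    exact h
  · filter_upwards [hΩz] with w hw using hμ w hw
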